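/- arXiv:1309.5216 — 4 statements merged into one kernel-verified Lean document; each statement's English description precedes it below -/
import Mathlib

section
/- The Rogers–Selberg identity holds: ∑_{r=0}^∞ a^r q^{r²}/(q;q)_r = 1/(aq;q)_∞ · ∑_{r=0}^∞ (1-aq^{2r})/(1-a) · (a;q)_r/(q;q)_r · (-1)^r a^{2r} q^{5r(r-1)/2 + 2r}. -/
/-- The finite q-Pochhammer symbol `(a;q)_k`. -/
noncomputable def qPoch (a q : ℂ) (k : ℕ) : ℂ := ∏ j ∈ Finset.range k, (1 - a * q ^ j)

/-- The infinite q-Pochhammer symbol `(a;q)_∞`. -/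
noncomputable def qPochInf (a q : ℂ) : ℂ := ∏' j : ℕ, (1 - a * q ^ j)

/-!
Write `F(a)` for the left-hand series and `Φ(a)` for the series on the right. From
`F(a) = F(aq) + aq F(aq²)` and `(aq;q)_∞ = (1 - aq) (aq²;q)_∞`, the function `(aq;q)_∞ F(a)`
satisfies `G(a) = (1 - aq) G(aq) + aq (1 - aq) (1 - aq²) G(aq²)`, and so does `Φ`, whose terms
telescope against an explicit correction sequence. Along `a, aq, aq², …` the difference
`E = (aq;q)_∞ F - Φ` therefore solves a second-order recurrence with coefficients `1 + O(|q|ⁿ)`,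
and `E(aqⁿ) → 0` since `F(0) = Φ(0) = 1` and `(aqⁿ⁺¹;q)_∞ → 1`; such a solution vanishes at its
start, so `E(a) = 0`.
-/

namespace RogersSelberg

open Finset Filter Topology

lemma summable_mul_pow_mul_pow {ρ B : ℝ} (hρ0 : 0 ≤ ρ) (hρ1 : ρ < 1) (hB : 0 ≤ B) (C : ℝ)
    {c : ℕ → ℕ} (hc : ∀ n, c n + n ≤ c (n + 1)) :
    Summable fun n => C * B ^ n * ρ ^ c n := by
  refine summable_of_ratio_norm_eventually_le (r := 1 / 2) (by norm_num) ?_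
  have hsmall : ∀ᶠ n : ℕ in atTop, B * ρ ^ n ≤ 1 / 2 := by
    have := (tendsto_pow_atTop_nhds_zero_of_lt_one hρ0 hρ1).const_mul B
    rw [mul_zero] at this
    exact this.eventually (eventually_le_nhds (by norm_num))
  filter_upwards [hsmall] with n hn
  simp only [norm_mul, norm_pow, Real.norm_eq_abs, abs_of_nonneg hB, abs_of_nonneg hρ0]
  calc |C| * B ^ (n + 1) * ρ ^ c (n + 1) ≤ |C| * B ^ (n + 1) * ρ ^ (c n + n) := by
        have := pow_le_pow_of_le_one hρ0 hρ1.le (hc n)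
        gcongr
    _ = |C| * B ^ n * ρ ^ c n * (B * ρ ^ n) := by ring
    _ ≤ |C| * B ^ n * ρ ^ c n * (1 / 2) := by gcongr
    _ = 1 / 2 * (|C| * B ^ n * ρ ^ c n) := by ring

/- With `m n = max ‖e n‖ ‖e (n + 1)‖` one gets `m 0 ≤ (∏ k < N, (1 + δ k)) * m N`, and the product
stays below `exp (∑ δ)`. -/
lemma eq_zero_of_recurrence {R : Type*} [NormedRing R] {e u v : ℕ → R} {δ : ℕ → ℝ}
    (hδ : Summable δ) (hδ0 : ∀ n, 0 ≤ δ n) (huv : ∀ n, ‖u n‖ + ‖v n‖ ≤ 1 + δ n)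
    (he : ∀ n, e n = u n * e (n + 1) + v n * e (n + 2)) (hlim : Tendsto e atTop (𝓝 0)) :
    e 0 = 0 := by
  set m : ℕ → ℝ := fun n => max ‖e n‖ ‖e (n + 1)‖
  have hm0 : ∀ n, 0 ≤ m n := fun n => (norm_nonneg _).trans (le_max_left _ _)
  have hstep : ∀ n, m n ≤ (1 + δ n) * m (n + 1) := by
    intro n
    refine max_le ?_ ((le_max_left _ _).trans (le_mul_of_one_le_left (hm0 _) ?_))
    · calc ‖e n‖ ≤ ‖u n‖ * ‖e (n + 1)‖ + ‖v n‖ * ‖e (n + 2)‖ := by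
            rw [he n]
            exact (norm_add_le _ _).trans (add_le_add (norm_mul_le _ _) (norm_mul_le _ _))
        _ ≤ (‖u n‖ + ‖v n‖) * m (n + 1) := by
            rw [add_mul]
            gcongr
            exacts [le_max_left _ _, le_max_right _ _]
        _ ≤ (1 + δ n) * m (n + 1) := mul_le_mul_of_nonneg_right (huv n) (hm0 _)
    · linarith [hδ0 n]
  have hiter : ∀ N, m 0 ≤ (∏ k ∈ range N, (1 + δ k)) * m N := by
    intro N
    induction N with
    | zero => simp
    | succ N ih =>
      calc m 0 ≤ (∏ k ∈ range N, (1 + δ k)) * m N := ih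
        _ ≤ (∏ k ∈ range N, (1 + δ k)) * ((1 + δ N) * m (N + 1)) := by
            gcongr
            · exact prod_nonneg fun k _ => by linarith [hδ0 k]
            · exact hstep N
        _ = (∏ k ∈ range (N + 1), (1 + δ k)) * m (N + 1) := by rw [prod_range_succ]; ring
  have hprod : ∀ N, ∏ k ∈ range N, (1 + δ k) ≤ Real.exp (∑' k, δ k) := by
    intro N
    calc ∏ k ∈ range N, (1 + δ k) ≤ ∏ k ∈ range N, Real.exp (δ k) :=
          prod_le_prod (fun k _ => by linarith [hδ0 k]) fun k _ => by
            linarith [Real.add_one_le_exp (δ k)]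
      _ = Real.exp (∑ k ∈ range N, δ k) := (Real.exp_sum _ _).symm
      _ ≤ Real.exp (∑' k, δ k) := Real.exp_le_exp.mpr (hδ.sum_le_tsum _ fun k _ => hδ0 k)
  have hmlim : Tendsto m atTop (𝓝 0) := by
    simpa using hlim.norm.max (hlim.norm.comp (tendsto_add_atTop_nat 1))
  have hm00 : m 0 ≤ 0 := by
    refine ge_of_tendsto (by simpa using hmlim.const_mul (Real.exp (∑' k, δ k)))
      (Eventually.of_forall fun N => (hiter N).trans ?_)
    exact mul_le_mul_of_nonneg_right (hprod N) (hm0 N)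
  exact norm_le_zero_iff.mp ((le_max_left _ _).trans hm00)

section qPoch

variable {x q : ℂ}

@[simp]
lemma qPoch_zero : qPoch x q 0 = 1 := prod_range_zero _

lemma qPoch_succ (n : ℕ) : qPoch x q (n + 1) = qPoch x q n * (1 - x * q ^ n) :=
  prod_range_succ _ n

lemma qPoch_succ' (n : ℕ) : qPoch x q (n + 1) = (1 - x) * qPoch (x * q) q n := by
  rw [qPoch, prod_range_succ', qPoch, pow_zero, mul_one, mul_comm]
  congr 1
  exact prod_congr rfl fun i _ => by ring

lemma continuous_qPoch (q : ℂ) (n : ℕ) : Continuous fun x => qPoch x q n := by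
  unfold qPoch
  fun_prop

lemma norm_one_sub_mul_pow_le (hq : ‖q‖ ≤ 1) {R : ℝ} (hx : ‖x‖ ≤ R) (j : ℕ) :
    ‖1 - x * q ^ j‖ ≤ 1 + R :=
  calc ‖1 - x * q ^ j‖ ≤ 1 + ‖x‖ * ‖q‖ ^ j := by simpa using norm_sub_le (1 : ℂ) (x * q ^ j)
    _ ≤ 1 + R := by
      gcongr
      exact (mul_le_of_le_one_right (norm_nonneg x) (pow_le_one₀ (norm_nonneg q) hq)).trans hx

lemma norm_qPoch_le (hq : ‖q‖ ≤ 1) {R : ℝ} (hx : ‖x‖ ≤ R) (n : ℕ) :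
    ‖qPoch x q n‖ ≤ (1 + R) ^ n :=
  calc ‖qPoch x q n‖ ≤ ∏ j ∈ range n, ‖1 - x * q ^ j‖ := Finset.norm_prod_le _ _
    _ ≤ ∏ _j ∈ range n, (1 + R) :=
        prod_le_prod (fun _ _ => norm_nonneg _) fun j _ => norm_one_sub_mul_pow_le hq hx j
    _ = (1 + R) ^ n := by rw [prod_const, card_range]

lemma pow_le_norm_qPoch_self (hq : ‖q‖ < 1) (n : ℕ) : (1 - ‖q‖) ^ n ≤ ‖qPoch q q n‖ := by
  calc (1 - ‖q‖) ^ n = ∏ _j ∈ range n, (1 - ‖q‖) := by rw [prod_const, card_range]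
    _ ≤ ∏ j ∈ range n, ‖1 - q * q ^ j‖ :=
        prod_le_prod (fun _ _ => sub_nonneg.mpr hq.le) fun j _ => ?_
    _ = ‖qPoch q q n‖ := by rw [qPoch, norm_prod]
  calc 1 - ‖q‖ ≤ 1 - ‖q * q ^ j‖ := by
        rw [← pow_succ', norm_pow]
        linarith [pow_le_pow_of_le_one (norm_nonneg q) hq.le (Nat.le_add_left 1 j), pow_one ‖q‖]
    _ ≤ ‖1 - q * q ^ j‖ := by simpa using norm_sub_norm_le (1 : ℂ) (q * q ^ j)

lemma qPoch_self_ne_zero (hq : ‖q‖ < 1) (n : ℕ) : qPoch q q n ≠ 0 :=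
  norm_pos_iff.mp <| (pow_pos (by linarith) n).trans_le (pow_le_norm_qPoch_self hq n)

lemma norm_inv_qPoch_self_le (hq : ‖q‖ < 1) (n : ℕ) :
    ‖(qPoch q q n)⁻¹‖ ≤ ((1 - ‖q‖) ^ n)⁻¹ := by
  rw [norm_inv]
  exact inv_anti₀ (pow_pos (by linarith) n) (pow_le_norm_qPoch_self hq n)

end qPoch

section qPochInf

variable {x q : ℂ}

lemma summable_norm_mul_pow (hq : ‖q‖ < 1) (x : ℂ) : Summable fun j : ℕ => ‖x * q ^ j‖ := by
  simpa [norm_mul, norm_pow] using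
    (summable_geometric_of_lt_one (norm_nonneg q) hq).mul_left ‖x‖

lemma multipliable_one_sub_mul_pow (hq : ‖q‖ < 1) (x : ℂ) :
    Multipliable fun j : ℕ => 1 - x * q ^ j := by
  have h : Multipliable fun j : ℕ => 1 + -(x * q ^ j) := multipliable_one_add_of_summable (R := ℂ)
    (by simpa only [norm_neg] using summable_norm_mul_pow hq x)
  simpa only [← sub_eq_add_neg] using h

lemma qPochInf_eq_qPoch_mul (hq : ‖q‖ < 1) (x : ℂ) (k : ℕ) :
    qPochInf x q = qPoch x q k * qPochInf (x * q ^ k) q := by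
  have htail : Multipliable fun j : ℕ => 1 - x * q ^ (j + k) :=
    (multipliable_one_sub_mul_pow hq (x * q ^ k)).congr fun j => by ring
  rw [qPochInf, ← Multipliable.prod_mul_tprod_nat_mul' (f := fun j => 1 - x * q ^ j) htail,
    qPoch, qPochInf]
  congr 1
  exact tprod_congr fun j => by ring

lemma qPochInf_succ (hq : ‖q‖ < 1) (x : ℂ) : qPochInf x q = (1 - x) * qPochInf (x * q) q := by
  simpa [qPoch] using qPochInf_eq_qPoch_mul hq x 1

lemma qPochInf_ne_zero (hq : ‖q‖ < 1) (hx : ∀ j : ℕ, x * q ^ j ≠ 1) : qPochInf x q ≠ 0 := by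
  simpa [qPochInf, sub_eq_add_neg] using
    tprod_one_add_ne_zero_of_summable (R := ℂ) (f := fun j => -(x * q ^ j))
      (fun j h => hx j (by linear_combination -h)) (by simpa using summable_norm_mul_pow hq x)

lemma tendsto_qPochInf_mul_pow (hq : ‖q‖ < 1) (hx : qPochInf x q ≠ 0) :
    Tendsto (fun N => qPochInf (x * q ^ N) q) atTop (𝓝 1) := by
  have hsplit := qPochInf_eq_qPoch_mul hq x
  have hfin : ∀ N, qPoch x q N ≠ 0 := fun N h => hx (by rw [hsplit N, h, zero_mul])
  have hlim : Tendsto (fun N => qPoch x q N) atTop (𝓝 (qPochInf x q)) :=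
    (multipliable_one_sub_mul_pow hq x).hasProd.tendsto_prod_nat
  have := (tendsto_const_nhds (x := qPochInf x q)).div hlim hx
  rw [div_self hx] at this
  refine this.congr fun N => ?_
  rw [Pi.div_apply, hsplit N, mul_div_cancel_left₀ _ (hfin N)]

end qPochInf

noncomputable def rogersTerm (q a : ℂ) (n : ℕ) : ℂ := a ^ n * q ^ (n ^ 2) / qPoch q q n

noncomputable def rogersSeries (q a : ℂ) : ℂ := ∑' n, rogersTerm q a n

section rogers

variable {q : ℂ}

lemma norm_rogersTerm_le (hq : ‖q‖ < 1) {a : ℂ} {R : ℝ} (ha : ‖a‖ ≤ R) (n : ℕ) :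
    ‖rogersTerm q a n‖ ≤ (R / (1 - ‖q‖)) ^ n * ‖q‖ ^ (n ^ 2) := by
  lift R to NNReal using (norm_nonneg a).trans ha
  rw [rogersTerm, div_eq_mul_inv, norm_mul, norm_mul, norm_pow, norm_pow]
  calc ‖a‖ ^ n * ‖q‖ ^ n ^ 2 * ‖(qPoch q q n)⁻¹‖ ≤ R ^ n * ‖q‖ ^ n ^ 2 * ((1 - ‖q‖) ^ n)⁻¹ := by
        have := norm_inv_qPoch_self_le hq n
        gcongr
    _ = _ := by rw [div_pow]; ring

lemma summable_rogersBound (hq : ‖q‖ < 1) {R : ℝ} (hR : 0 ≤ R) :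
    Summable fun n : ℕ => (R / (1 - ‖q‖)) ^ n * ‖q‖ ^ (n ^ 2) := by
  simpa using summable_mul_pow_mul_pow (norm_nonneg q) hq (div_nonneg hR (by linarith)) 1
    fun n => by ring_nf; omega

lemma summable_rogersTerm (hq : ‖q‖ < 1) (a : ℂ) : Summable (rogersTerm q a) :=
  (summable_rogersBound hq (norm_nonneg a)).of_norm_bounded (norm_rogersTerm_le hq le_rfl)

lemma rogersTerm_succ_sub (hq : ‖q‖ < 1) (a : ℂ) (n : ℕ) :
    rogersTerm q a (n + 1) - rogersTerm q (a * q) (n + 1) = a * q * rogersTerm q (a * q * q) n := by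
  have hQ := qPoch_self_ne_zero hq n
  have hE : 1 - q * q ^ n ≠ 0 := by
    simpa [qPoch_succ, hQ] using qPoch_self_ne_zero hq (n + 1)
  rw [rogersTerm, rogersTerm, rogersTerm, qPoch_succ]
  field_simp
  ring

lemma rogersSeries_eq (hq : ‖q‖ < 1) (a : ℂ) :
    rogersSeries q a = rogersSeries q (a * q) + a * q * rogersSeries q (a * q * q) := by
  have hs := summable_rogersTerm hq
  have hshift : ∑' n, rogersTerm q a (n + 1) =
      ∑' n, rogersTerm q (a * q) (n + 1) + a * q * rogersSeries q (a * q * q) := by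
    rw [rogersSeries, ← tsum_mul_left, ← ((summable_nat_add_iff 1).2 (hs (a * q))).tsum_add
      ((hs (a * q * q)).mul_left _)]
    exact tsum_congr fun n => by linear_combination rogersTerm_succ_sub hq a n
  rw [rogersSeries, rogersSeries, (hs a).tsum_eq_zero_add, (hs (a * q)).tsum_eq_zero_add, hshift]
  simp only [rogersTerm, pow_zero, qPoch_zero]
  ring

lemma tendsto_rogersSeries_nhds_zero (hq : ‖q‖ < 1) :
    Tendsto (rogersSeries q) (𝓝 0) (𝓝 1) := by
  have hlim := tendsto_tsum_of_dominated_convergence (summable_rogersBound hq zero_le_one)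
    (f := fun b n => rogersTerm q b n) (g := rogersTerm q 0)
    (fun n => by unfold rogersTerm; exact (by fun_prop : Continuous _).tendsto 0)
    (by filter_upwards [Metric.closedBall_mem_nhds (0 : ℂ) one_pos] with b hb
        exact norm_rogersTerm_le hq (mem_closedBall_zero_iff.mp hb))
  have hg : rogersTerm q 0 0 = 1 := by simp [rogersTerm]
  rwa [tsum_eq_single 0 fun n hn => by simp [rogersTerm, hn], hg] at hlim

end rogers

def quadExp (n : ℕ) : ℕ := 5 * (n * (n - 1) / 2) + 2 * n

lemma quadExp_succ (n : ℕ) : quadExp (n + 1) = quadExp n + (5 * n + 2) := by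
  have h : (n + 1) * n = n * (n - 1) + 2 * n := by cases n <;> simp; ring
  simp only [quadExp, Nat.add_sub_cancel, h, Nat.add_mul_div_left _ _ two_pos]
  ring

/- `(1 - a q^{2n}) (a;q)_n / (1 - a)` with the division carried out, so that it is defined at
`a = 1`. -/
noncomputable def selbergWeight (q a : ℂ) : ℕ → ℂ
  | 0 => 1
  | n + 1 => (1 - a * q ^ (2 * (n + 1))) * qPoch (a * q) q n

noncomputable def selbergTerm (q a : ℂ) (n : ℕ) : ℂ :=
  (-1) ^ n * a ^ (2 * n) * q ^ quadExp n * selbergWeight q a n / qPoch q q n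

noncomputable def selbergSeries (q a : ℂ) : ℂ := ∑' n, selbergTerm q a n

noncomputable def selbergCorrection (q a : ℂ) : ℕ → ℂ
  | 0 => 0
  | n + 1 => (-1) ^ (n + 1) * a ^ (2 * (n + 1)) * q ^ quadExp (n + 1) *
      (1 + q ^ (n + 1) - a * q ^ (2 * (n + 1))) * qPoch (a * q) q n / qPoch q q n

section selberg

variable {q : ℂ}

lemma selbergTerm_succ (x : ℂ) (m : ℕ) :
    selbergTerm q x (m + 1) = (-1) ^ (m + 1) * x ^ (2 * (m + 1)) * q ^ quadExp (m + 1) *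
      ((1 - x * q ^ (2 * (m + 1))) * qPoch (x * q) q m) / (qPoch q q m * (1 - q * q ^ m)) := by
  rw [selbergTerm, qPoch_succ]
  rfl

lemma selbergCorrection_succ_succ (a : ℂ) (m : ℕ) :
    selbergCorrection q a (m + 1 + 1) = (-1) ^ (m + 2) * a ^ (2 * (m + 2)) *
      (q ^ quadExp (m + 1) * q ^ (5 * m + 7)) * (1 + q ^ (m + 2) - a * q ^ (2 * (m + 2))) *
      (qPoch (a * q) q m * (1 - a * q * q ^ m)) / (qPoch q q m * (1 - q * q ^ m)) := by
  simp only [selbergCorrection, qPoch_succ, quadExp_succ (m + 1), pow_add]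
  ring

lemma selbergTerm_sub_eq (hq : ‖q‖ < 1) (a : ℂ) (n : ℕ) :
    selbergTerm q a n - (1 - a * q) * selbergTerm q (a * q) n -
        a * q * (1 - a * q) * (1 - a * q * q) * selbergTerm q (a * q * q) n =
      selbergCorrection q a n - selbergCorrection q a (n + 1) := by
  cases n with
  | zero =>
    simp [selbergTerm, selbergWeight, selbergCorrection, quadExp]
    ring
  | succ m =>
    set P := qPoch (a * q) q m
    set D := qPoch q q m * (1 - q * q ^ m)
    have hD : D ≠ 0 := by
      simpa only [D, ← qPoch_succ] using qPoch_self_ne_zero hq (m + 1)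
    have h1 : (1 - a * q) * qPoch (a * q * q) q m = P * (1 - a * q * q ^ m) := by
      rw [← qPoch_succ', qPoch_succ]
    have h2 : (1 - a * q) * ((1 - a * q * q) * qPoch (a * q * q * q) q m) =
        P * (1 - a * q * q ^ m) * (1 - a * q * q ^ (m + 1)) := by
      rw [← qPoch_succ', ← qPoch_succ', qPoch_succ, qPoch_succ]
    have hc1 : selbergCorrection q a (m + 1) = (-1) ^ (m + 1) * a ^ (2 * (m + 1)) *
        q ^ quadExp (m + 1) * (1 + q ^ (m + 1) - a * q ^ (2 * (m + 1))) *
        (P * (1 - q * q ^ m)) / D := by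
      have hE : 1 - q * q ^ m ≠ 0 := right_ne_zero_of_mul hD
      simp only [selbergCorrection, P, D]
      field_simp
    rw [selbergTerm_succ, selbergTerm_succ, selbergTerm_succ, hc1, selbergCorrection_succ_succ]
    simp only [div_eq_mul_inv]
    linear_combination
      (-((-1) ^ (m + 1) * (a * q) ^ (2 * (m + 1)) * q ^ quadExp (m + 1) *
        (1 - a * q * q ^ (2 * (m + 1))) * D⁻¹)) * h1 +
      (-(a * q * ((-1) ^ (m + 1) * (a * q * q) ^ (2 * (m + 1)) * q ^ quadExp (m + 1) *
        (1 - a * q * q * q ^ (2 * (m + 1))) * D⁻¹))) * h2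

lemma norm_selbergWeight_le (hq : ‖q‖ < 1) {a : ℂ} {R : ℝ} (ha : ‖a‖ ≤ R) (n : ℕ) :
    ‖selbergWeight q a n‖ ≤ (1 + R) ^ (n + 1) := by
  have hR : 0 ≤ R := (norm_nonneg a).trans ha
  cases n with
  | zero => simpa [selbergWeight] using hR
  | succ n =>
    have haq : ‖a * q‖ ≤ R := by
      rw [norm_mul]; exact (mul_le_of_le_one_right (norm_nonneg a) hq.le).trans ha
    rw [selbergWeight, norm_mul, pow_succ']
    calc ‖1 - a * q ^ (2 * (n + 1))‖ * ‖qPoch (a * q) q n‖ ≤ (1 + R) * (1 + R) ^ n :=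
          mul_le_mul (norm_one_sub_mul_pow_le hq.le ha _) (norm_qPoch_le hq.le haq n)
            (norm_nonneg _) (by positivity)
      _ ≤ (1 + R) * (1 + R) ^ (n + 1) := by
          gcongr
          · linarith
          · omega

lemma norm_selbergTerm_le (hq : ‖q‖ < 1) {a : ℂ} {R : ℝ} (ha : ‖a‖ ≤ R) (n : ℕ) :
    ‖selbergTerm q a n‖ ≤ (1 + R) * (R ^ 2 * (1 + R) / (1 - ‖q‖)) ^ n * ‖q‖ ^ quadExp n := by
  lift R to NNReal using (norm_nonneg a).trans ha
  rw [selbergTerm, div_eq_mul_inv]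
  simp only [norm_mul, norm_pow, norm_neg, norm_one, one_pow, one_mul]
  calc ‖a‖ ^ (2 * n) * ‖q‖ ^ quadExp n * ‖selbergWeight q a n‖ * ‖(qPoch q q n)⁻¹‖
      ≤ R ^ (2 * n) * ‖q‖ ^ quadExp n * (1 + R) ^ (n + 1) * ((1 - ‖q‖) ^ n)⁻¹ := by
        have := norm_selbergWeight_le hq ha n
        have := norm_inv_qPoch_self_le hq n
        gcongr
    _ = _ := by rw [div_pow, mul_pow, pow_mul]; ring

lemma norm_selbergCorrection_succ_le (hq : ‖q‖ < 1) {a : ℂ} {R : ℝ} (ha : ‖a‖ ≤ R) (n : ℕ) :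
    ‖selbergCorrection q a (n + 1)‖ ≤
      (2 + R) * R ^ 2 * (R ^ 2 * (1 + R) / (1 - ‖q‖)) ^ n * ‖q‖ ^ quadExp (n + 1) := by
  lift R to NNReal using (norm_nonneg a).trans ha
  have haq : ‖a * q‖ ≤ R := by
    rw [norm_mul]; exact (mul_le_of_le_one_right (norm_nonneg a) hq.le).trans ha
  have hmid : ‖1 + q ^ (n + 1) - a * q ^ (2 * (n + 1))‖ ≤ 2 + R := by
    calc ‖1 + q ^ (n + 1) - a * q ^ (2 * (n + 1))‖
        ≤ ‖q ^ (n + 1)‖ + ‖1 - a * q ^ (2 * (n + 1))‖ := by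
          rw [add_sub_right_comm, add_comm]; exact norm_add_le _ _
      _ ≤ 1 + (1 + R) := by
          gcongr
          · rw [norm_pow]; exact pow_le_one₀ (norm_nonneg q) hq.le
          · exact norm_one_sub_mul_pow_le hq.le ha _
      _ = 2 + R := by ring
  rw [selbergCorrection, div_eq_mul_inv]
  simp only [norm_mul, norm_pow, norm_neg, norm_one, one_pow, one_mul]
  calc ‖a‖ ^ (2 * (n + 1)) * ‖q‖ ^ quadExp (n + 1) * ‖1 + q ^ (n + 1) - a * q ^ (2 * (n + 1))‖ *
        ‖qPoch (a * q) q n‖ * ‖(qPoch q q n)⁻¹‖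
      ≤ R ^ (2 * (n + 1)) * ‖q‖ ^ quadExp (n + 1) * (2 + R) * (1 + R) ^ n *
        ((1 - ‖q‖) ^ n)⁻¹ := by
        have := norm_qPoch_le hq.le haq n
        have := norm_inv_qPoch_self_le hq n
        gcongr
    _ = _ := by rw [div_pow, mul_pow, pow_mul, pow_succ]; ring

lemma summable_selbergBound (hq : ‖q‖ < 1) {R : ℝ} (hR : 0 ≤ R) :
    Summable fun n => (1 + R) * (R ^ 2 * (1 + R) / (1 - ‖q‖)) ^ n * ‖q‖ ^ quadExp n :=
  summable_mul_pow_mul_pow (norm_nonneg q) hq (div_nonneg (by positivity) (by linarith)) _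
    fun n => by rw [quadExp_succ]; omega

lemma summable_selbergTerm (hq : ‖q‖ < 1) (a : ℂ) : Summable (selbergTerm q a) :=
  (summable_selbergBound hq (norm_nonneg a)).of_norm_bounded (norm_selbergTerm_le hq le_rfl)

lemma summable_selbergCorrection (hq : ‖q‖ < 1) (a : ℂ) : Summable (selbergCorrection q a) := by
  refine (summable_nat_add_iff 1).1 <| Summable.of_norm_bounded ?_
    (norm_selbergCorrection_succ_le hq le_rfl)
  exact summable_mul_pow_mul_pow (norm_nonneg q) hq
    (div_nonneg (by positivity) (by linarith)) _ fun n => by rw [quadExp_succ (n + 1)]; omega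

lemma selbergSeries_eq (hq : ‖q‖ < 1) (a : ℂ) :
    selbergSeries q a = (1 - a * q) * selbergSeries q (a * q) +
      a * q * (1 - a * q) * (1 - a * q * q) * selbergSeries q (a * q * q) := by
  have hs := summable_selbergTerm hq
  have hc := summable_selbergCorrection hq a
  have htel : ∑' n, (selbergCorrection q a n - selbergCorrection q a (n + 1)) = 0 := by
    rw [hc.tsum_sub ((summable_nat_add_iff 1).2 hc), hc.tsum_eq_zero_add]
    simp [selbergCorrection]
  rw [← tsum_congr (selbergTerm_sub_eq hq a), ((hs a).sub ((hs _).mul_left _)).tsum_sub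
    ((hs _).mul_left _), (hs a).tsum_sub ((hs _).mul_left _), tsum_mul_left, tsum_mul_left] at htel
  rw [selbergSeries, selbergSeries, selbergSeries]
  linear_combination htel

lemma tendsto_selbergSeries_nhds_zero (hq : ‖q‖ < 1) :
    Tendsto (selbergSeries q) (𝓝 0) (𝓝 1) := by
  have hcont : ∀ n, Continuous fun b => selbergTerm q b n := by
    intro n
    have : Continuous fun b => selbergWeight q b n := by
      cases n
      · exact continuous_const
      · exact (by fun_prop : Continuous fun b : ℂ => 1 - b * q ^ _).mul
          ((continuous_qPoch q _).comp (continuous_mul_const q))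
    unfold selbergTerm
    fun_prop
  have hlim := tendsto_tsum_of_dominated_convergence (summable_selbergBound hq zero_le_one)
    (f := fun b n => selbergTerm q b n) (g := selbergTerm q 0) (fun n => (hcont n).tendsto 0)
    (by filter_upwards [Metric.closedBall_mem_nhds (0 : ℂ) one_pos] with b hb
        exact norm_selbergTerm_le hq (mem_closedBall_zero_iff.mp hb))
  have hg : selbergTerm q 0 0 = 1 := by simp [selbergTerm, selbergWeight, quadExp]
  rwa [tsum_eq_single 0 fun n hn => by simp [selbergTerm, hn], hg] at hlim

end selberg

noncomputable def defect (q a : ℂ) : ℂ := qPochInf (a * q) q * rogersSeries q a - selbergSeries q a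

section defect

variable {q : ℂ}

lemma defect_eq (hq : ‖q‖ < 1) (a : ℂ) :
    defect q a = (1 - a * q) * defect q (a * q) +
      a * q * (1 - a * q) * (1 - a * q * q) * defect q (a * q * q) := by
  simp only [defect]
  rw [rogersSeries_eq hq a, selbergSeries_eq hq a, qPochInf_succ hq (a * q),
    qPochInf_succ hq (a * q * q)]
  ring

lemma tendsto_defect_mul_pow (hq : ‖q‖ < 1) {a : ℂ} (ha : qPochInf (a * q) q ≠ 0) :
    Tendsto (fun n => defect q (a * q ^ n)) atTop (𝓝 0) := by
  have hzero : Tendsto (fun n => a * q ^ n) atTop (𝓝 0) := by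
    simpa using (tendsto_pow_atTop_nhds_zero_of_norm_lt_one hq).const_mul a
  have hprod : Tendsto (fun n => qPochInf (a * q ^ n * q) q) atTop (𝓝 1) :=
    (tendsto_qPochInf_mul_pow hq ha).congr fun n => by ring_nf
  simpa [defect] using (hprod.mul ((tendsto_rogersSeries_nhds_zero hq).comp hzero)).sub
    ((tendsto_selbergSeries_nhds_zero hq).comp hzero)

lemma defect_eq_zero (hq : ‖q‖ < 1) {a : ℂ} (ha : qPochInf (a * q) q ≠ 0) : defect q a = 0 := by
  have hrec : ∀ n, defect q (a * q ^ n) = (1 - a * q ^ (n + 1)) * defect q (a * q ^ (n + 1)) +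
      a * q ^ (n + 1) * (1 - a * q ^ (n + 1)) * (1 - a * q ^ (n + 2)) *
        defect q (a * q ^ (n + 2)) := fun n => by
    have h := defect_eq hq (a * q ^ n)
    rwa [show a * q ^ n * q * q = a * q ^ (n + 2) by ring,
      show a * q ^ n * q = a * q ^ (n + 1) by ring] at h
  have hcoeff : ∀ n, ‖1 - a * q ^ (n + 1)‖ +
      ‖a * q ^ (n + 1) * (1 - a * q ^ (n + 1)) * (1 - a * q ^ (n + 2))‖ ≤
        1 + ‖a‖ * (1 + (1 + ‖a‖) ^ 2) * ‖q‖ ^ (n + 1) := fun n => by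
    have h1 := norm_one_sub_mul_pow_le (x := a) hq.le le_rfl (n + 1)
    have h2 := norm_one_sub_mul_pow_le (x := a) hq.le le_rfl (n + 2)
    have h3 : ‖1 - a * q ^ (n + 1)‖ ≤ 1 + ‖a‖ * ‖q‖ ^ (n + 1) := by
      simpa using norm_sub_le (1 : ℂ) (a * q ^ (n + 1))
    simp only [norm_mul, norm_pow] at h1 h2 ⊢
    have : ‖a‖ * ‖q‖ ^ (n + 1) * ‖1 - a * q ^ (n + 1)‖ * ‖1 - a * q ^ (n + 2)‖ ≤
        ‖a‖ * ‖q‖ ^ (n + 1) * (1 + ‖a‖) * (1 + ‖a‖) := by gcongr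
    nlinarith
  have hδ : Summable fun n : ℕ => ‖a‖ * (1 + (1 + ‖a‖) ^ 2) * ‖q‖ ^ (n + 1) :=
    ((summable_geometric_of_lt_one (norm_nonneg q) hq).comp_injective
      (add_left_injective 1)).mul_left _
  simpa using eq_zero_of_recurrence hδ (fun n => by positivity) hcoeff hrec
    (tendsto_defect_mul_pow hq ha)

end defect

lemma selbergTerm_eq_of_ne_one {q a : ℂ} (hq : ‖q‖ < 1) (ha : a ≠ 1) (r : ℕ) :
    selbergTerm q a r = (1 - a * q ^ (2 * r)) / (1 - a) * (qPoch a q r / qPoch q q r) *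
      (-1 : ℂ) ^ r * a ^ (2 * r) * q ^ (5 * (r * (r - 1) / 2) + 2 * r) := by
  have h1a : (1 : ℂ) - a ≠ 0 := sub_ne_zero.mpr ha.symm
  have hQ := qPoch_self_ne_zero hq r
  cases r with
  | zero => simp [selbergTerm, selbergWeight, quadExp, h1a]
  | succ m =>
    rw [selbergTerm, selbergWeight, qPoch_succ' (x := a),
      show 5 * ((m + 1) * (m + 1 - 1) / 2) + 2 * (m + 1) = quadExp (m + 1) from rfl]
    field_simp

end RogersSelberg

/-- The Rogers–Selberg identity. -/
theorem rogers_selberg (q a : ℂ) (hq : ‖q‖ < 1) (ha : a ≠ 1)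
    (ha' : ∀ k : ℕ, a * q ^ (k + 1) ≠ 1) :
    ∑' r : ℕ, a ^ r * q ^ (r ^ 2) / qPoch q q r
      = 1 / qPochInf (a * q) q *
          ∑' r : ℕ, (1 - a * q ^ (2 * r)) / (1 - a) * (qPoch a q r / qPoch q q r) *
            (-1 : ℂ) ^ r * a ^ (2 * r) * q ^ (5 * (r * (r - 1) / 2) + 2 * r) := by
  have hP : qPochInf (a * q) q ≠ 0 :=
    RogersSelberg.qPochInf_ne_zero hq fun j => by simpa only [pow_succ', mul_assoc] using ha' j
  have hE := RogersSelberg.defect_eq_zero hq hP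
  rw [RogersSelberg.defect, sub_eq_zero] at hE
  rw [← tsum_congr fun r => RogersSelberg.selbergTerm_eq_of_ne_one hq ha r,
    ← RogersSelberg.selbergSeries, ← hE, one_div, inv_mul_cancel_left₀ hP]
  rfl
end

section
/- The C_n Weyl denominator formula holds: det_{1≤i,j≤n}(x_i^{j-1} - x_i^{2n-j+1}) = ∏_{i=1}^n (1 - x_i²) · ∏_{1≤i<j≤n} (x_i - x_j)(x_i x_j - 1). -/
/-!
Dividing row `i` by `1 - xᵢ²`, column `j` becomes `x^j (1 + x² + ⋯ + x^(2(n-1-j)))`, which is the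
homogenization of degree `n - 1`, evaluated at `(1 + x², x)`, of the Chebyshev polynomial
`S_{n-1-j}`: this is the homogeneous form of `t^m S_m(t + t⁻¹) = (t^(2m+2) - 1) / (t² - 1)`.
As `S_m` has degree `m` and leading coefficient `1`, column operations turn the matrix into the
projective Vandermonde matrix `(xᵢ^k (1 + xᵢ²)^(n-1-k))`, whose determinant is
`∏_{i<j} (x_j (1 + xᵢ²) - xᵢ (1 + x_j²)) = ∏_{i<j} (xᵢ - x_j)(xᵢ x_j - 1)`.
-/

open Polynomial Finset Matrix

namespace Polynomial

variable {R : Type*} [CommSemiring R]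

theorem eval_homogenize_eq_sum {n : ℕ} (p : R[X]) (a b : R) :
    MvPolynomial.eval ![a, b] (homogenize p n) =
      ∑ k : Fin (n + 1), b ^ (k : ℕ) * a ^ (k.rev : ℕ) * p.coeff k.rev := by
  have hsum : MvPolynomial.eval ![a, b] (homogenize p n) =
      ∑ kl ∈ antidiagonal n, p.coeff kl.1 * (a ^ kl.1 * b ^ kl.2) := by
    simp [homogenize, MvPolynomial.eval_monomial]
  rw [hsum, Nat.sum_antidiagonal_eq_sum_range_succ (fun k l => p.coeff k * (a ^ k * b ^ l)),
    ← sum_range_reflect, ← Fin.sum_univ_eq_sum_range]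
  refine sum_congr rfl fun k _ => ?_
  have hk : (k.rev : ℕ) = n - k := by rw [Fin.val_rev]; omega
  have hk' : n.succ - 1 - k = n - k := by omega
  rw [hk, hk', Nat.sub_sub_self (by omega : (k : ℕ) ≤ n)]
  ring

end Polynomial

namespace Matrix

variable {R : Type*} [CommRing R]

theorem det_eval_homogenize_eq_det_projVandermonde {n : ℕ} (v w : Fin n → R) (p : Fin n → R[X])
    (h_deg : ∀ j, (p j).natDegree ≤ j.rev) (h_coeff : ∀ j, (p j).coeff j.rev = 1) :
    det (of fun i j => MvPolynomial.eval ![w i, v i] (homogenize (p j) (n - 1))) =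
      det (projVandermonde v w) := by
  have hC : (of fun k j => (p j).coeff k.rev).IsLowerTriangular := fun k j hkj =>
    coeff_eq_zero_of_natDegree_lt ((h_deg j).trans_lt (Fin.rev_lt_rev.mpr hkj))
  have hfac : (of fun i j => MvPolynomial.eval ![w i, v i] (homogenize (p j) (n - 1))) =
      projVandermonde v w * of fun k j => (p j).coeff k.rev := by
    ext i j
    obtain ⟨m, rfl⟩ : ∃ m, n = m + 1 := ⟨n - 1, by have := i.pos; omega⟩
    simp only [of_apply, mul_apply, projVandermonde_apply, Nat.add_sub_cancel,
      eval_homogenize_eq_sum]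
  rw [hfac, det_mul, det_of_isLowerTriangular _ hC]
  simp only [of_apply, h_coeff, prod_const_one, mul_one]

end Matrix

namespace Polynomial.Chebyshev

variable {R : Type*} [CommRing R]

theorem natDegree_S_natCast_le (m : ℕ) : (S R m).natDegree ≤ m := by
  induction m using Nat.twoStepInduction with
  | zero => simp
  | one => simpa using natDegree_X_le
  | more m ih₀ ih₁ =>
    push_cast at ih₁ ⊢
    rw [S_add_two]
    refine (natDegree_sub_le_of_le (natDegree_mul_le_of_le natDegree_X_le ih₁) ih₀).trans ?_
    omega

theorem coeff_S_natCast_self (m : ℕ) : (S R m).coeff m = 1 := by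
  induction m using Nat.twoStepInduction with
  | zero => simp
  | one => simp
  | more m ih₀ ih₁ =>
    push_cast at ih₁ ⊢
    rw [S_add_two, coeff_sub, coeff_X_mul, ih₁,
      coeff_eq_zero_of_natDegree_lt ((natDegree_S_natCast_le m).trans_lt (by omega)), sub_zero]

theorem homogenize_S_natCast_add_two (m : ℕ) :
    homogenize (S R (m + 2 : ℕ)) (m + 2) = .X 0 * homogenize (S R (m + 1 : ℕ)) (m + 1)
      - .X 1 ^ 2 * homogenize (S R m) m := by
  push_cast
  rw [S_add_two, homogenize_sub, show m + 2 = 1 + (m + 1) by ring,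
    homogenize_mul _ _ natDegree_X_le (by exact_mod_cast natDegree_S_natCast_le (m + 1)),
    show 1 + (m + 1) = 2 + m by ring]
  have h := homogenize_mul (1 : R[X]) (S R m) (m := 2) (natDegree_one.trans_le (by omega))
    (natDegree_S_natCast_le m)
  rw [one_mul] at h
  simp [h]

theorem sub_mul_eval_homogenize_S {u v w : R} (hw : w ^ 2 = u * v) (m : ℕ) :
    (u - v) * MvPolynomial.eval ![u + v, w] (homogenize (S R m) m) =
      u ^ (m + 1) - v ^ (m + 1) := by
  induction m using Nat.twoStepInduction with
  | zero => simp
  | one =>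
    simp only [Nat.cast_one, S_one, homogenize_X one_ne_zero, tsub_self, pow_zero, mul_one,
      MvPolynomial.eval_X, cons_val_zero]
    ring
  | more m ih₀ ih₁ =>
    rw [homogenize_S_natCast_add_two]
    simp only [map_sub, map_mul, map_pow, MvPolynomial.eval_X, cons_val_zero, cons_val_one,
      cons_val_fin_one]
    linear_combination (u + v) * ih₁ - w ^ 2 * ih₀ - (u ^ (m + 1) - v ^ (m + 1)) * hw

theorem one_sub_sq_mul_eval_homogenize_S (x : R) (j m : ℕ) :
    (1 - x ^ 2) * MvPolynomial.eval ![1 + x ^ 2, x] (homogenize (S R m) (j + m)) =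
      x ^ j - x ^ (j + 2 * (m + 1)) := by
  have hS := sub_mul_eval_homogenize_S (u := 1) (v := x ^ 2) (w := x) (by ring) m
  have hsplit := homogenize_mul (1 : R[X]) (S R m) (m := j) (natDegree_one.trans_le j.zero_le)
    (natDegree_S_natCast_le m)
  rw [one_mul] at hsplit
  rw [hsplit, homogenize_one, map_mul, map_pow, MvPolynomial.eval_X]
  simp only [cons_val_one, cons_val_fin_one]
  linear_combination x ^ j * hS

end Polynomial.Chebyshev

open Polynomial.Chebyshev in
/-- The `C_n` Weyl denominator formula.  Rows and columns of the matrix are indexed by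
`Fin n`, with the `(i,j)`-entry (for 1-based indices) `x_i^{j-1} - x_i^{2n-j+1}`. -/
theorem weyl_denominator_C (R : Type*) [CommRing R] (n : ℕ) (x : Fin n → R) :
    Matrix.det (Matrix.of fun i j : Fin n => x i ^ (j : ℕ) - x i ^ (2 * n - (j : ℕ)))
      = (∏ i : Fin n, (1 - x i ^ 2)) *
          ∏ i : Fin n, ∏ j ∈ Finset.Ioi i, ((x i - x j) * (x i * x j - 1)) := by
  have hentry (i j : Fin n) : x i ^ (j : ℕ) - x i ^ (2 * n - (j : ℕ)) =
      (1 - x i ^ 2) * MvPolynomial.eval ![1 + x i ^ 2, x i] (homogenize (S R j.rev) (n - 1)) := by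
    have hj := Fin.val_rev j
    rw [show n - 1 = j + j.rev by omega, one_sub_sq_mul_eval_homogenize_S,
      show (j : ℕ) + 2 * (j.rev + 1) = 2 * n - j by omega]
  calc _ = det (of fun i j => (1 - x i ^ 2) * of (fun i j =>
          MvPolynomial.eval ![1 + x i ^ 2, x i] (homogenize (S R j.rev) (n - 1))) i j) :=
        congrArg det (by ext i j; exact hentry i j)
    _ = (∏ i, (1 - x i ^ 2)) * det (projVandermonde x fun i => 1 + x i ^ 2) := by
        rw [det_mul_column, det_eval_homogenize_eq_det_projVandermonde _ _ (fun j => S R j.rev)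
          (fun j => natDegree_S_natCast_le _) (fun j => coeff_S_natCast_self _)]
    _ = _ := by
        rw [det_projVandermonde]
        congr 1
        refine prod_congr rfl fun i _ => prod_congr rfl fun j _ => ?_
        ring
end

section
/- The B_n Weyl denominator formula holds: det_{1≤i,j≤n}(x_i^{j-1} - x_i^{2n-j}) = ∏_{i=1}^n (1 - x_i) · ∏_{1≤i<j≤n} (x_i - x_j)(x_i x_j - 1). -/
/-!
Put `y_i = x_i + x_i⁻¹`. Dividing row `i` by `(1 - x_i) x_i^{n-1}` turns the entry in column `j`
into `W_{n-1-j}(y_i)`, where `W_r` is monic of degree `r`; column operations then reduce the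
determinant to the Vandermonde determinant in the `y_i`. Multiplying the rows back by `x_i^{n-1}`
gives the projective Vandermonde matrix with rows `(x_i^j (x_i^2 + 1)^{n-1-j})_j`, whose
determinant is `∏_{i<j} (x_j (x_i^2 + 1) - x_i (x_j^2 + 1)) = ∏_{i<j} (x_i - x_j) (x_i x_j - 1)`.
Since this needs the `x_i` to be invertible, the identity is first proved for the variables in
the fraction field of `ℤ[x_1, …, x_n]` and then specialised.
-/

open Polynomial Finset Matrix

namespace Polynomial

/-- Chebyshev polynomials of the fourth kind, rescaled so that `W_r(x + x⁻¹) = x⁻ʳ + ⋯ + xʳ`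
(compare `Chebyshev.S` for the second kind). -/
noncomputable def chebyshevW (R : Type*) [CommRing R] : ℕ → R[X]
  | 0 => 1
  | 1 => X + 1
  | r + 2 => X * chebyshevW R (r + 1) - chebyshevW R r

theorem chebyshevW_monic_and_natDegree {R : Type*} [CommRing R] [Nontrivial R] :
    ∀ r, (chebyshevW R r).Monic ∧ (chebyshevW R r).natDegree = r
  | 0 => ⟨monic_one, natDegree_one⟩
  | 1 => ⟨monic_X_add_C 1, natDegree_X_add_C 1⟩
  | r + 2 => by
    obtain ⟨-, hd₀⟩ : (chebyshevW R r).Monic ∧ _ := chebyshevW_monic_and_natDegree r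
    obtain ⟨hm₁, hd₁⟩ : (chebyshevW R (r + 1)).Monic ∧ _ := chebyshevW_monic_and_natDegree (r + 1)
    have hd : (X * chebyshevW R (r + 1)).natDegree = r + 2 := by
      rw [natDegree_X_mul hm₁.ne_zero, hd₁]
    have hlt : (chebyshevW R r).natDegree < (X * chebyshevW R (r + 1)).natDegree := by omega
    exact ⟨(monic_X.mul hm₁).sub_of_left (degree_lt_degree hlt),
      (natDegree_sub_eq_left_of_natDegree_lt hlt).trans hd⟩

theorem chebyshevW_eval_add_inv {F : Type*} [Field F] {x : F} (hx : x ≠ 0) :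
    ∀ r, (1 - x) * x ^ r * (chebyshevW F r).eval (x + x⁻¹) = 1 - x ^ (2 * r + 1)
  | 0 => by simp [chebyshevW]
  | 1 => by
    simp only [chebyshevW, eval_add, eval_X, eval_one]
    linear_combination (1 - x) * mul_inv_cancel₀ hx
  | r + 2 => by
    have h₀ := chebyshevW_eval_add_inv hx r
    have h₁ := chebyshevW_eval_add_inv hx (r + 1)
    simp only [chebyshevW, eval_sub, eval_mul, eval_X]
    linear_combination (x ^ 2 + 1) * h₁ - x ^ 2 * h₀ +
      (1 - x) * x ^ (r + 1) * (chebyshevW F (r + 1)).eval (x + x⁻¹) * mul_inv_cancel₀ hx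

end Polynomial

theorem Matrix.det_eval_rev_eq_det_pow_rev {R : Type*} [CommRing R] {n : ℕ} (v : Fin n → R)
    (p : Fin n → R[X]) (h_deg : ∀ i, (p i).natDegree = i) (h_monic : ∀ i, (p i).Monic) :
    (of fun i j => (p j.rev).eval (v i)).det = (of fun i j => v i ^ (j.rev : ℕ)).det := by
  have h := (det_eval_matrixOfPolynomials_eq_det_vandermonde (v ∘ Fin.rev) p h_deg h_monic).symm
  rw [← det_submatrix_equiv_self Fin.revPerm, ← det_submatrix_equiv_self Fin.revPerm (of _)]
  convert h using 2 <;> ext i j <;>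
    simp only [submatrix_apply, of_apply, Fin.revPerm_apply, Fin.rev_rev, vandermonde_apply,
      Function.comp_apply]

section WeylDenominatorB

variable {R : Type*} [CommRing R] {n : ℕ}

def weylMatrixB (x : Fin n → R) : Matrix (Fin n) (Fin n) R :=
  of fun i j => x i ^ (j : ℕ) - x i ^ (2 * n - (j : ℕ) - 1)

def weylDenominatorB (x : Fin n → R) : R :=
  (∏ i, (1 - x i)) * ∏ i, ∏ j ∈ Ioi i, ((x i - x j) * (x i * x j - 1))

theorem RingHom.map_det_weylMatrixB {S : Type*} [CommRing S] (f : R →+* S) (x : Fin n → R) :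
    f (weylMatrixB x).det = (weylMatrixB fun i => f (x i)).det := by
  rw [RingHom.map_det]
  congr 1
  ext i j
  simp [weylMatrixB]

theorem RingHom.map_weylDenominatorB {S : Type*} [CommRing S] (f : R →+* S) (x : Fin n → R) :
    f (weylDenominatorB x) = weylDenominatorB fun i => f (x i) := by
  simp [weylDenominatorB]

theorem det_weylMatrixB_of_ne_zero {F : Type*} [Field F] (x : Fin n → F) (hx : ∀ i, x i ≠ 0) :
    (weylMatrixB x).det = weylDenominatorB x := by
  let y : Fin n → F := fun i => x i + (x i)⁻¹
  have hB : weylMatrixB x =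
      of fun i j => ((1 - x i) * x i ^ (n - 1)) * (chebyshevW F j.rev).eval (y i) := by
    ext i j
    have hW : (1 - x i) * x i ^ (j.rev : ℕ) * (chebyshevW F j.rev).eval (y i) = _ :=
      chebyshevW_eval_add_inv (hx i) j.rev
    have hj : n - 1 = j + j.rev ∧ 2 * n - j - 1 = j + (2 * j.rev + 1) := by
      simp only [Fin.val_rev]; omega
    rw [weylMatrixB, of_apply, of_apply, hj.1, hj.2, pow_add, pow_add]
    linear_combination -x i ^ (j : ℕ) * hW
  have hPV : projVandermonde x (fun i => x i ^ 2 + 1) =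
      of fun i j => x i ^ (n - 1) * y i ^ (j.rev : ℕ) := by
    ext i j
    have hj : n - 1 = j + j.rev := by simp only [Fin.val_rev]; omega
    have hxy : x i * (x i + (x i)⁻¹) = x i ^ 2 + 1 := by
      rw [mul_add, mul_inv_cancel₀ (hx i), sq]
    rw [projVandermonde_apply, of_apply, hj, pow_add, mul_assoc, ← mul_pow, hxy]
  have hW : (of fun i j => (chebyshevW F j.rev).eval (y i)).det =
      (of fun i j => y i ^ (j.rev : ℕ)).det :=
    det_eval_rev_eq_det_pow_rev y (fun i => chebyshevW F i)
      (fun i => (chebyshevW_monic_and_natDegree i).2) (fun i => (chebyshevW_monic_and_natDegree i).1)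
  calc (weylMatrixB x).det
      = (∏ i, ((1 - x i) * x i ^ (n - 1))) *
          (of fun i j => (chebyshevW F j.rev).eval (y i)).det := by
        rw [hB]
        exact det_mul_column _ _
    _ = (∏ i, (1 - x i)) * ((∏ i, x i ^ (n - 1)) * (of fun i j => y i ^ (j.rev : ℕ)).det) := by
        rw [hW, prod_mul_distrib, mul_assoc]
    _ = (∏ i, (1 - x i)) * (projVandermonde x (fun i => x i ^ 2 + 1)).det := by
        rw [hPV]
        exact congrArg _ (det_mul_column _ _).symm
    _ = weylDenominatorB x := by
        rw [det_projVandermonde, weylDenominatorB]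
        congr 1
        exact prod_congr rfl fun i _ => prod_congr rfl fun j _ => by ring

theorem det_weylMatrixB_X :
    (weylMatrixB (MvPolynomial.X : Fin n → MvPolynomial (Fin n) ℤ)).det =
      weylDenominatorB MvPolynomial.X := by
  apply IsFractionRing.injective _ (FractionRing (MvPolynomial (Fin n) ℤ))
  rw [RingHom.map_det_weylMatrixB, RingHom.map_weylDenominatorB]
  exact det_weylMatrixB_of_ne_zero _ fun i => by simp [MvPolynomial.X_ne_zero]

end WeylDenominatorB

/-- The `B_n` Weyl denominator formula.  Rows and columns of the matrix are indexed by
`Fin n`, with the `(i,j)`-entry (for 1-based indices) `x_i^{j-1} - x_i^{2n-j}`. -/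
theorem weyl_denominator_B (R : Type*) [CommRing R] (n : ℕ) (x : Fin n → R) :
    Matrix.det (Matrix.of fun i j : Fin n => x i ^ (j : ℕ) - x i ^ (2 * n - (j : ℕ) - 1))
      = (∏ i : Fin n, (1 - x i)) *
          ∏ i : Fin n, ∏ j ∈ Finset.Ioi i, ((x i - x j) * (x i * x j - 1)) := by
  have h := congrArg (MvPolynomial.eval₂Hom (Int.castRingHom R) x) det_weylMatrixB_X
  simp only [RingHom.map_det_weylMatrixB, RingHom.map_weylDenominatorB,
    MvPolynomial.eval₂Hom_X'] at h
  exact h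
end

section
/- The specialisation formula for Hall–Littlewood polynomials at even partitions holds: for σ ∈ {0,1} and any partition λ with conjugate λ′, writing r_i := λ′_i, one has q^{(σ+1)|λ|} · P_{2λ}(1, q, q², …; q) = ∏_{i≥1} q^{r_i(r_i+σ)} / (q)_{r_i - r_{i+1}}. -/
/-- The normalisation factor `v_λ(t) = ∏_{i≥0} (t;t)_{m_i}/(1-t)^{m_i}` for a partition
`λ` (given as a function `ℕ → ℕ`, parts `λ 0 ≥ λ 1 ≥ ⋯`) considered in `n` variables,
where `m_i` is the number of indices `k < n` with `λ k = i` (so `m_0 = n - l(λ)`). -/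
noncomputable def HLv (lam : ℕ → ℕ) (n : ℕ) (t : ℂ) : ℂ :=
  ∏ i ∈ Finset.range (lam 0 + 1),
    qPoch t t (((Finset.range n).filter fun k => lam k = i).card) /
      (1 - t) ^ (((Finset.range n).filter fun k => lam k = i).card)

/-- The Hall–Littlewood polynomial `P_λ(x₁,…,x_n;t)`, defined by the symmetrisation
formula `P_λ = v_λ(t)⁻¹ ∑_{w ∈ S_n} w(x^λ ∏_{i<j} (x_i - t x_j)/(x_i - x_j))`. -/
noncomputable def HLP (lam : ℕ → ℕ) (t : ℂ) {n : ℕ} (x : Fin n → ℂ) : ℂ :=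
  (∑ w : Equiv.Perm (Fin n),
      (∏ i : Fin n, x (w i) ^ lam (i : ℕ)) *
        ∏ i : Fin n, ∏ j ∈ Finset.Ioi i,
          ((x (w i) - t * x (w j)) / (x (w i) - x (w j))))
    / HLv lam n t

/-- The conjugate partition: `conjP λ j = λ′_j = #{k : λ k ≥ j}` for `j ≥ 1`. -/
def conjP (lam : ℕ →₀ ℕ) (j : ℕ) : ℕ := (lam.support.filter fun k => j ≤ lam k).card

/-!
At `x = (1, q, …, q^(N-1))` and `t = q` the symmetrisation collapses to the identity permutation:
any other `w` has `i < j` with `w i = w j + 1`, and the factor `x (w i) - q x (w j)` vanishes.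
The surviving term is `q^(∑ k·2λ_k) (q;q)_N / (1-q)^N`, the cross-ratios telescoping row by row,
while the multiplicities of `2λ` give
`v_{2λ}(q) = (q;q)_{N-r₁} ∏ (q;q)_{r_i - r_{i+1}} / (1-q)^N`.
Since `|λ| = ∑ r_i` and `∑ k λ_k = ∑ r_i (r_i - 1) / 2`, the powers of `q` combine to
`∏ q^{r_i (r_i + σ)}`, leaving the factor `(q;q)_N / (q;q)_{N-r₁}`, which tends to `1`.
-/

open Finset Filter Topology

section GeometricProgression

variable {q : ℂ}

lemma one_sub_pow_ne_zero_of_not_isOfFinOrder (hq : ¬IsOfFinOrder q) {k : ℕ} (hk : k ≠ 0) :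
    1 - q ^ k ≠ 0 := fun h =>
  hq (isOfFinOrder_iff_pow_eq_one.2 ⟨k, Nat.pos_of_ne_zero hk, (sub_eq_zero.1 h).symm⟩)

lemma not_isOfFinOrder_of_norm_lt_one (hq : ‖q‖ < 1) : ¬IsOfFinOrder q := fun h => by
  obtain ⟨n, hn, hqn⟩ := isOfFinOrder_iff_pow_eq_one.1 h
  exact hq.ne (Complex.norm_eq_one_of_pow_eq_one hqn hn.ne')

lemma qPoch_self_eq_prod (q : ℂ) (k : ℕ) : qPoch q q k = ∏ j ∈ range k, (1 - q ^ (j + 1)) :=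
  prod_congr rfl fun j _ => by rw [pow_succ']

lemma qPoch_self_ne_zero (hq : ¬IsOfFinOrder q) (k : ℕ) : qPoch q q k ≠ 0 := by
  rw [qPoch_self_eq_prod]
  exact prod_ne_zero_iff.2 fun j _ => one_sub_pow_ne_zero_of_not_isOfFinOrder hq j.succ_ne_zero

lemma qPoch_add (a q : ℂ) (m n : ℕ) :
    qPoch a q (m + n) = qPoch a q m * ∏ k ∈ range n, (1 - a * q ^ (m + k)) :=
  prod_range_add _ m n

lemma tendsto_qPoch_div_qPoch_sub (hq : ‖q‖ < 1) (r : ℕ) :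
    Tendsto (fun N => qPoch q q N / qPoch q q (N - r)) atTop (𝓝 1) := by
  have htail : Tendsto (fun N => ∏ k ∈ range r, (1 - q * q ^ (N - r + k))) atTop (𝓝 1) := by
    rw [← prod_const_one (s := range r)]
    refine tendsto_finsetProd _ fun k _ => ?_
    have hpow : Tendsto (fun N => q ^ (N - r + k)) atTop (𝓝 0) :=
      (tendsto_pow_atTop_nhds_zero_of_norm_lt_one hq).comp
        (tendsto_atTop_mono (fun N => Nat.le_add_right _ _) (tendsto_sub_atTop_nat r))
    simpa using (hpow.const_mul q).const_sub 1
  refine htail.congr' (eventually_atTop.2 ⟨r, fun N hN => ?_⟩)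
  dsimp only
  have hsplit := qPoch_add q q (N - r) r
  rw [Nat.sub_add_cancel hN] at hsplit
  rw [hsplit, mul_div_cancel_left₀ _ (qPoch_self_ne_zero (not_isOfFinOrder_of_norm_lt_one hq) _)]

lemma prod_range_one_sub_pow_succ_div (hq : ¬IsOfFinOrder q) (m : ℕ) :
    ∏ d ∈ range m, (1 - q ^ (d + 2)) / (1 - q ^ (d + 1)) = (1 - q ^ (m + 1)) / (1 - q) := by
  induction m with
  | zero => simp [div_self (by simpa using one_sub_pow_ne_zero_of_not_isOfFinOrder hq one_ne_zero)]
  | succ m ih =>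
    rw [prod_range_succ, ih,
      div_mul_div_cancel₀' (one_sub_pow_ne_zero_of_not_isOfFinOrder hq m.succ_ne_zero)]

lemma Fin.prod_Ioi_val {M : Type*} [CommMonoid M] {N : ℕ} (i : Fin N) (f : ℕ → M) :
    ∏ j ∈ Ioi i, f j = ∏ j ∈ Ioo (i : ℕ) N, f j := by
  rw [← Fin.map_valEmbedding_Ioi, prod_map]
  rfl

lemma prod_Ioi_geometric_ratio (hq : ¬IsOfFinOrder q) (hq0 : q ≠ 0) {N : ℕ} (i : Fin N) :
    ∏ j ∈ Ioi i, (q ^ (i : ℕ) - q * q ^ (j : ℕ)) / (q ^ (i : ℕ) - q ^ (j : ℕ)) =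
      (1 - q ^ (N - i)) / (1 - q) := by
  have hfactor (d : ℕ) :
      (q ^ (i : ℕ) - q * q ^ (i + 1 + d)) / (q ^ (i : ℕ) - q ^ (i + 1 + d)) =
        (1 - q ^ (d + 2)) / (1 - q ^ (d + 1)) := by
    rw [← mul_div_mul_left (1 - q ^ (d + 2)) _ (pow_ne_zero i hq0)]
    ring_nf
  refine (Fin.prod_Ioi_val i fun j => (q ^ (i : ℕ) - q * q ^ j) / (q ^ (i : ℕ) - q ^ j)).trans
    ?_
  rw [← Ico_add_one_left_eq_Ioo, prod_Ico_eq_prod_range]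
  simp only [hfactor, prod_range_one_sub_pow_succ_div hq]
  rw [show N - (i + 1) + 1 = N - i by omega]

lemma prod_prod_Ioi_geometric_ratio (hq : ¬IsOfFinOrder q) (hq0 : q ≠ 0) (N : ℕ) :
    ∏ i : Fin N, ∏ j ∈ Ioi i,
        (q ^ (i : ℕ) - q * q ^ (j : ℕ)) / (q ^ (i : ℕ) - q ^ (j : ℕ)) =
      qPoch q q N / (1 - q) ^ N := by
  simp only [prod_Ioi_geometric_ratio hq hq0]
  rw [prod_div_distrib, prod_const, card_univ, Fintype.card_fin,
    Fin.prod_univ_eq_prod_range (fun i => 1 - q ^ (N - i)), qPoch_self_eq_prod,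
    ← prod_range_reflect (fun j => 1 - q ^ (j + 1))]
  exact congrArg (· / _) (prod_congr rfl fun j hj => by rw [mem_range] at hj; congr 2; omega)

end GeometricProgression

lemma Equiv.Perm.exists_lt_val_eq_val_add_one {N : ℕ} {w : Equiv.Perm (Fin N)} (hw : w ≠ 1) :
    ∃ i j, i < j ∧ (w i : ℕ) = w j + 1 := by
  by_contra! h
  apply hw
  obtain _ | n := N
  · exact Subsingleton.elim _ _
  have hmono : StrictMono w.symm := Fin.strictMono_iff_lt_succ.2 fun v => by
    refine lt_of_le_of_ne (not_lt.1 fun hlt => h _ _ hlt ?_) (w.symm.injective.ne ?_)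
    · simp
    · exact Fin.castSucc_lt_succ.ne
  have hid := Subsingleton.elim (hmono.orderIsoOfSurjective w.symm w.symm.surjective)
    (OrderIso.refl _)
  ext v
  simpa using (congrArg Fin.val (congrArg (· (w v)) (congrArg DFunLike.coe hid))).symm

lemma HLP_geometric {q : ℂ} (hq : ¬IsOfFinOrder q) (hq0 : q ≠ 0) (lam : ℕ → ℕ)
    (N : ℕ) :
    HLP lam q (fun i : Fin N => q ^ (i : ℕ)) =
      q ^ (∑ k ∈ range N, k * lam k) * (qPoch q q N / (1 - q) ^ N) / HLv lam N q := by
  rw [HLP, sum_eq_single_of_mem 1 (mem_univ 1)]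
  · simp only [Equiv.Perm.one_apply, prod_prod_Ioi_geometric_ratio hq hq0, ← pow_mul,
      prod_pow_eq_pow_sum, Fin.sum_univ_eq_sum_range (fun k => k * lam k)]
  · intro w _ hw
    obtain ⟨i, j, hij, hwij⟩ := Equiv.Perm.exists_lt_val_eq_val_add_one hw
    refine mul_eq_zero_of_right _ (prod_eq_zero (mem_univ i) (prod_eq_zero (mem_Ioi.2 hij) ?_))
    rw [hwij, pow_succ', sub_self, zero_div]

lemma HLv_eq_prod_div (lam : ℕ → ℕ) (hlam : ∀ k, lam k ≤ lam 0) (N : ℕ) (t : ℂ) :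
    HLv lam N t =
      (∏ i ∈ range (lam 0 + 1), qPoch t t #{k ∈ range N | lam k = i}) / (1 - t) ^ N := by
  rw [HLv, prod_div_distrib, prod_pow_eq_pow_sum,
    ← card_eq_sum_card_fiberwise fun k _ => by simpa using Nat.lt_succ_of_le (hlam k), card_range]

lemma prod_range_two_mul_add_one_of_odd {M : Type*} [CommMonoid M] (L : ℕ) (g : ℕ → M)
    (hodd : ∀ i, Odd i → g i = 1) :
    ∏ i ∈ range (2 * L + 1), g i = ∏ i ∈ range (L + 1), g (2 * i) := by
  rw [← prod_image fun a _ b _ (h : 2 * a = 2 * b) => by omega]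
  refine (prod_subset ?_ fun i hi hni => hodd i ?_).symm
  · intro i hi
    obtain ⟨a, ha, rfl⟩ := mem_image.1 hi
    rw [mem_range] at ha ⊢
    omega
  · refine Nat.not_even_iff_odd.1 fun ⟨a, ha⟩ => hni (mem_image.2 ⟨a, ?_, by omega⟩)
    rw [mem_range] at hi ⊢
    omega

section ConjugatePartition

variable {lam : ℕ →₀ ℕ}

lemma conjP_antitone (lam : ℕ →₀ ℕ) : Antitone (conjP lam) := fun _ _ hab =>
  card_le_card (monotone_filter_right _ fun _ _ => hab.trans)

lemma lt_conjP_iff (hlam : Antitone lam) {j : ℕ} (hj : j ≠ 0) (k : ℕ) :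
    k < conjP lam j ↔ j ≤ lam k := by
  have hmem (m : ℕ) : m ∈ lam.support.filter (j ≤ lam ·) ↔ j ≤ lam m := by
    simp only [mem_filter, Finsupp.mem_support_iff, and_iff_right_iff_imp]
    omega
  rw [conjP]
  constructor
  · intro hk
    by_contra! hlt
    have hsub : lam.support.filter (j ≤ lam ·) ⊆ range k := fun m hm => by
      by_contra! hkm
      exact ((hmem m).1 hm).not_gt ((hlam (not_lt.1 (mt mem_range.2 hkm))).trans_lt hlt)
    have := card_le_card hsub
    rw [card_range] at this
    omega
  · intro hk
    have hsub : range (k + 1) ⊆ lam.support.filter (j ≤ lam ·) := fun m hm =>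
      (hmem m).2 (hk.trans (hlam (Nat.lt_succ_iff.1 (mem_range.1 hm))))
    have := card_le_card hsub
    rw [card_range] at this
    omega

lemma conjP_le_of_conjP_one_le {N : ℕ} (hN : conjP lam 1 ≤ N) {j : ℕ} (hj : j ≠ 0) :
    conjP lam j ≤ N :=
  (conjP_antitone lam (Nat.one_le_iff_ne_zero.2 hj)).trans hN

lemma finsuppSum_eq_sum_range (hlam : Antitone lam) {N : ℕ} (hN : conjP lam 1 ≤ N) :
    (lam.sum fun _ v => v) = ∑ k ∈ range N, lam k :=
  Finsupp.sum_of_support_subset lam (fun k hk => mem_range.2 <|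
    ((lt_conjP_iff hlam one_ne_zero k).2
      (Nat.one_le_iff_ne_zero.2 (Finsupp.mem_support_iff.1 hk))).trans_le hN) _ fun _ _ => rfl

-- Count the cells of the diagram of `λ` by rows and by columns.
lemma sum_range_mul_eq_sum_conjP (hlam : Antitone lam) {N : ℕ} (hN : conjP lam 1 ≤ N)
    (f : ℕ → ℕ) :
    ∑ k ∈ range N, lam k * f k =
      ∑ j ∈ range (lam 0), ∑ k ∈ range (conjP lam (j + 1)), f k := by
  have hrow (k : ℕ) : lam k * f k = ∑ _j ∈ range (lam k), f k := by
    rw [sum_const, card_range, smul_eq_mul]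
  rw [sum_congr rfl fun k _ => hrow k]
  refine sum_comm' fun k j => ?_
  have := lt_conjP_iff hlam j.add_one_ne_zero k
  have := conjP_le_of_conjP_one_le hN j.add_one_ne_zero
  have := hlam (Nat.zero_le k)
  simp only [mem_range]
  omega

lemma sum_range_add_one_add_two_mul (σ n : ℕ) :
    ∑ k ∈ range n, (σ + 1 + 2 * k) = n * (n + σ) := by
  induction n with
  | zero => simp
  | succ n ih => rw [sum_range_succ, ih]; ring

lemma weight_add_sum_mul_two_mul (hlam : Antitone lam) (σ : ℕ) {N : ℕ}
    (hN : conjP lam 1 ≤ N) :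
    (σ + 1) * (lam.sum fun _ v => v) + ∑ k ∈ range N, k * (2 * lam k) =
      ∑ j ∈ range (lam 0), conjP lam (j + 1) * (conjP lam (j + 1) + σ) := by
  rw [finsuppSum_eq_sum_range hlam hN, mul_sum, ← sum_add_distrib]
  calc ∑ k ∈ range N, ((σ + 1) * lam k + k * (2 * lam k))
      = ∑ k ∈ range N, lam k * (σ + 1 + 2 * k) := sum_congr rfl fun _ _ => by ring
    _ = _ := by simp only [sum_range_mul_eq_sum_conjP hlam hN, sum_range_add_one_add_two_mul]

lemma card_two_mul_eq_zero (hlam : Antitone lam) (N : ℕ) :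
    #{k ∈ range N | 2 * lam k = 0} = N - conjP lam 1 := by
  rw [← Nat.card_Ico]
  congr 1
  ext k
  have := lt_conjP_iff hlam one_ne_zero k
  simp only [mem_filter, mem_range, mem_Ico]
  omega

lemma card_two_mul_eq_two_mul_add_two (hlam : Antitone lam) {N : ℕ} (hN : conjP lam 1 ≤ N)
    (i : ℕ) :
    #{k ∈ range N | 2 * lam k = 2 * (i + 1)} = conjP lam (i + 1) - conjP lam (i + 2) := by
  rw [← Nat.card_Ico]
  congr 1
  ext k
  have := lt_conjP_iff hlam (by omega : i + 2 ≠ 0) k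
  have := lt_conjP_iff hlam i.add_one_ne_zero k
  have := conjP_le_of_conjP_one_le hN i.add_one_ne_zero
  simp only [mem_filter, mem_range, mem_Ico]
  omega

lemma HLv_two_mul (hlam : Antitone lam) {N : ℕ} (hN : conjP lam 1 ≤ N) (t : ℂ) :
    HLv (fun k => 2 * lam k) N t =
      qPoch t t (N - conjP lam 1) *
        (∏ i ∈ range (lam 0), qPoch t t (conjP lam (i + 1) - conjP lam (i + 2))) /
          (1 - t) ^ N := by
  rw [HLv_eq_prod_div _ (fun k => Nat.mul_le_mul_left 2 (hlam (Nat.zero_le k))),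
    prod_range_two_mul_add_one_of_odd _ _ fun i hi => ?_, prod_range_succ',
    card_two_mul_eq_zero hlam N, mul_comm]
  · simp only [card_two_mul_eq_two_mul_add_two hlam hN]
  · have hempty : #{k ∈ range N | 2 * lam k = i} = 0 :=
      card_eq_zero.2 (filter_eq_empty_iff.2 fun k _ h =>
        Nat.not_odd_iff_even.2 ⟨lam k, by omega⟩ (h ▸ hi))
    rw [hempty]
    exact prod_range_zero _

end ConjugatePartition

lemma pow_mul_HLP_two_mul_geometric {q : ℂ} (hq : ¬IsOfFinOrder q) (hq0 : q ≠ 0) (σ : ℕ)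
    {lam : ℕ →₀ ℕ} (hlam : Antitone lam) {N : ℕ} (hN : conjP lam 1 ≤ N) :
    q ^ ((σ + 1) * (lam.sum fun _ v => v)) *
        HLP (fun k => 2 * lam k) q (fun i : Fin N => q ^ (i : ℕ)) =
      (∏ i ∈ range (lam 0),
          q ^ (conjP lam (i + 1) * (conjP lam (i + 1) + σ)) /
            qPoch q q (conjP lam (i + 1) - conjP lam (i + 2))) *
        (qPoch q q N / qPoch q q (N - conjP lam 1)) := by
  have hq1 : (1 - q) ^ N ≠ 0 :=
    pow_ne_zero N (by simpa using one_sub_pow_ne_zero_of_not_isOfFinOrder hq one_ne_zero)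
  have hpoch := qPoch_self_ne_zero hq
  have hprod : ∏ i ∈ range (lam 0), qPoch q q (conjP lam (i + 1) - conjP lam (i + 2)) ≠ 0 :=
    prod_ne_zero_iff.2 fun _ _ => hpoch _
  rw [HLP_geometric hq hq0, HLv_two_mul hlam hN, prod_div_distrib, prod_pow_eq_pow_sum,
    ← weight_add_sum_mul_two_mul hlam σ hN, pow_add]
  field_simp [hpoch N, hpoch (N - conjP lam 1)]

theorem hall_littlewood_specialisation_general (q : ℂ) (hq : ‖q‖ < 1) (hq0 : q ≠ 0)
    (σ : ℕ) (lam : ℕ →₀ ℕ) (hlam : Antitone lam) :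
    Filter.Tendsto
      (fun N : ℕ =>
        q ^ ((σ + 1) * (lam.sum fun _ v => v)) *
          HLP (fun k => 2 * lam k) q (fun i : Fin N => q ^ (i : ℕ)))
      Filter.atTop
      (nhds (∏ i ∈ Finset.range (lam 0),
        q ^ (conjP lam (i + 1) * (conjP lam (i + 1) + σ)) /
          qPoch q q (conjP lam (i + 1) - conjP lam (i + 2)))) := by
  have hlim := (tendsto_qPoch_div_qPoch_sub hq (conjP lam 1)).const_mul
    (∏ i ∈ range (lam 0), q ^ (conjP lam (i + 1) * (conjP lam (i + 1) + σ)) /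
      qPoch q q (conjP lam (i + 1) - conjP lam (i + 2)))
  rw [mul_one] at hlim
  refine hlim.congr' (eventually_atTop.2 ⟨conjP lam 1, fun N hN => ?_⟩)
  exact (pow_mul_HLP_two_mul_geometric (not_isOfFinOrder_of_norm_lt_one hq) hq0 σ hlam hN).symm

/-- The specialisation formula
`q^{(σ+1)|λ|} P_{2λ}(1,q,q²,…;q) = ∏_{i≥1} q^{r_i(r_i+σ)}/(q)_{r_i-r_{i+1}}`
with `r_i = λ′_i`; the evaluation of the Hall–Littlewood symmetric function at the
infinite geometric progression `(1,q,q²,…)` is expressed as the limit of its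
evaluations at `(1,q,…,q^{N-1})` as `N → ∞`. -/
theorem hall_littlewood_specialisation (q : ℂ) (hq : ‖q‖ < 1) (hq0 : q ≠ 0)
    (σ : ℕ) (hσ : σ ≤ 1) (lam : ℕ →₀ ℕ) (hlam : Antitone lam) :
    Filter.Tendsto
      (fun N : ℕ =>
        q ^ ((σ + 1) * (lam.sum fun _ v => v)) *
          HLP (fun k => 2 * lam k) q (fun i : Fin N => q ^ (i : ℕ)))
      Filter.atTop
      (nhds (∏ i ∈ Finset.range (lam 0),
        q ^ (conjP lam (i + 1) * (conjP lam (i + 1) + σ)) /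
          qPoch q q (conjP lam (i + 1) - conjP lam (i + 2)))) :=
  hall_littlewood_specialisation_general q hq hq0 σ lam hlam
end
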